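/- Let Q be as in the context and fix a real number b. Then the function a ↦ ψ(a,b) is differentiable on (−∞, b), and its derivative at every a < b equals −(1/2)·φ(a,b). -/

import Mathlib

open MeasureTheory intervalIntegral

/-- `φ(a,b) = ∫₀¹ Q'((1−t)b + t·a)/√(t(1−t)) dt`. -/
noncomputable def phi (Q : Polynomial ℝ) (a b : ℝ) : ℝ :=
  ∫ t in (0:ℝ)..1, Q.derivative.eval ((1 - t) * b + t * a) / Real.sqrt (t * (1 - t))

/-- `ψ(a,b) = (b−a)·∫₀¹ Q'((1−t)b + t·a)·√((1−t)/t) dt − 2π`. -/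
noncomputable def psi (Q : Polynomial ℝ) (a b : ℝ) : ℝ :=
  (b - a) * (∫ t in (0:ℝ)..1, Q.derivative.eval ((1 - t) * b + t * a) * Real.sqrt ((1 - t) / t))
    - 2 * Real.pi

/-!
Write `ψ(s, b) = (b - s) I(s) - 2π` with `I(s) = ∫₀¹ Q'(u_s(t)) √((1-t)/t) dt` and
`u_s(t) = (1-t) b + t s`. The weight `√((1-t)/t)` is integrable, so differentiating under the
integral sign gives `I'(a) = ∫₀¹ Q''(u_a) t √((1-t)/t) dt = ∫₀¹ Q''(u_a) √(t(1-t)) dt`.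
Since `d u_a / dt = a - b` and `√(t(1-t))` vanishes at both ends of `[0, 1]` with derivative
`√((1-t)/t) - 1 / (2√(t(1-t)))`, integration by parts gives `(b - a) I'(a) = I(a) - φ(a,b)/2`,
hence `∂ψ/∂a = -I(a) + (b - a) I'(a) = -φ(a,b)/2`.
-/

open Set
open scoped Interval

/-- Holds for every real `t`: off `(0, 1)` both sides are `0`, as `x / 0 = 0` and `√x = 0`
for `x < 0`. -/
theorem Real.sqrt_one_sub_div_self (t : ℝ) :
    √((1 - t) / t) = (1 - t) / √(t * (1 - t)) := by
  have hsq : (1 - t) / t = t * (1 - t) / t ^ 2 := by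
    rcases eq_or_ne t 0 with rfl | ht
    · simp
    · field_simp
  rw [hsq, Real.sqrt_div' _ (sq_nonneg t), Real.sqrt_sq_eq_abs]
  rcases le_or_gt (t * (1 - t)) 0 with hneg | hpos
  · simp [Real.sqrt_eq_zero'.2 hneg]
  · have ht : 0 < t := by nlinarith
    rw [abs_of_pos ht, div_eq_div_iff ht.ne' (Real.sqrt_pos.2 hpos).ne']
    nlinarith [Real.sq_sqrt hpos.le]

theorem Real.mul_sqrt_one_sub_div_self (t : ℝ) : t * √((1 - t) / t) = √(t * (1 - t)) := by
  rw [Real.sqrt_one_sub_div_self, ← mul_div_assoc, Real.div_sqrt]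

theorem intervalIntegrable_inv_sqrt_mul_one_sub :
    IntervalIntegrable (fun t => (√(t * (1 - t)))⁻¹) volume 0 1 := by
  have hleft : IntervalIntegrable (fun t : ℝ => t ^ (-(1 / 2) : ℝ)) volume 0 1 :=
    intervalIntegrable_rpow' (by norm_num)
  have hright : IntervalIntegrable (fun t : ℝ => (1 - t) ^ (-(1 / 2) : ℝ)) volume 0 1 := by
    simpa using (hleft.comp_sub_left 1).symm
  refine (hleft.add hright).mono_fun' (by fun_prop) ?_
  refine (ae_restrict_iff' measurableSet_uIoc).2 (.of_forall fun t ht => ?_)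
  rw [uIoc_of_le zero_le_one] at ht
  obtain ⟨ht0, ht1⟩ := ht
  rcases ht1.lt_or_eq with ht1 | rfl
  · have h0 := Real.sqrt_pos.2 ht0
    have h1 := Real.sqrt_pos.2 (sub_pos.2 ht1)
    have hsum : 1 ≤ √t + √(1 - t) := by
      nlinarith [Real.sq_sqrt ht0.le, Real.sq_sqrt (sub_pos.2 ht1).le]
    simp only [Real.norm_eq_abs]
    rw [Real.sqrt_mul ht0.le, abs_of_pos (by positivity), Real.rpow_neg ht0.le,
      Real.rpow_neg (sub_pos.2 ht1).le, ← Real.sqrt_eq_rpow, ← Real.sqrt_eq_rpow]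
    calc (√t * √(1 - t))⁻¹ ≤ (√t + √(1 - t)) * (√t * √(1 - t))⁻¹ :=
          le_mul_of_one_le_left (by positivity) hsum
      _ = (√t)⁻¹ + (√(1 - t))⁻¹ := by field_simp; ring
  · simp

theorem intervalIntegrable_sqrt_one_sub_div_self :
    IntervalIntegrable (fun t => √((1 - t) / t)) volume 0 1 := by
  simp_rw [Real.sqrt_one_sub_div_self, div_eq_mul_inv]
  exact intervalIntegrable_inv_sqrt_mul_one_sub.continuousOn_mul (by fun_prop)

theorem hasDerivAt_sqrt_mul_one_sub {t : ℝ} (ht : t ∈ Ioo (0 : ℝ) 1) :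
    HasDerivAt (fun t => √(t * (1 - t))) (√((1 - t) / t) - 1 / 2 / √(t * (1 - t))) t := by
  have hpos : 0 < t * (1 - t) := mul_pos ht.1 (sub_pos.2 ht.2)
  have hS := (Real.sqrt_pos.2 hpos).ne'
  have hq : HasDerivAt (fun t : ℝ => t * (1 - t)) (1 - 2 * t) t :=
    ((hasDerivAt_id' t).mul ((hasDerivAt_id' t).const_sub 1)).congr_deriv (by ring)
  convert hq.sqrt hpos.ne' using 1
  rw [Real.sqrt_one_sub_div_self]
  field_simp
  ring

/-- Integration by parts against `√(t(1-t))`, which vanishes at both ends of `[0, 1]`. -/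
theorem integral_deriv_mul_sqrt_mul_one_sub {f f' : ℝ → ℝ} (hf : ContinuousOn f (Icc 0 1))
    (hf' : IntervalIntegrable f' volume 0 1)
    (hderiv : ∀ t ∈ Ioo (0 : ℝ) 1, HasDerivAt f (f' t) t) :
    ∫ t in (0 : ℝ)..1, f' t * √(t * (1 - t)) =
      1 / 2 * (∫ t in (0 : ℝ)..1, f t / √(t * (1 - t))) -
        ∫ t in (0 : ℝ)..1, f t * √((1 - t) / t) := by
  have hS : ContinuousOn (fun t : ℝ => √(t * (1 - t))) (Icc 0 1) := by fun_prop
  have hf₀ : ContinuousOn f [[0, 1]] := by rwa [uIcc_of_le zero_le_one]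
  have hint₁ := hf'.mul_continuousOn (uIcc_of_le (zero_le_one' ℝ) ▸ hS)
  have hint₂ := intervalIntegrable_sqrt_one_sub_div_self.continuousOn_mul hf₀
  have hint₃ : IntervalIntegrable (fun t => 1 / 2 * (f t / √(t * (1 - t)))) volume 0 1 := by
    simpa only [div_eq_mul_inv] using
      (intervalIntegrable_inv_sqrt_mul_one_sub.continuousOn_mul hf₀).const_mul (1 / 2)
  have hsplit : (fun t => f' t * √(t * (1 - t)) +
        f t * (√((1 - t) / t) - 1 / 2 / √(t * (1 - t)))) =
      fun t => f' t * √(t * (1 - t)) +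
        (f t * √((1 - t) / t) - 1 / 2 * (f t / √(t * (1 - t)))) := by
    ext t; ring
  have hFTC := integral_eq_sub_of_hasDerivAt_of_le zero_le_one (hf.mul hS)
    (fun t ht => (hderiv t ht).mul (hasDerivAt_sqrt_mul_one_sub ht))
    (hsplit ▸ hint₁.add (hint₂.sub hint₃))
  rw [hsplit, integral_add hint₁ (hint₂.sub hint₃), integral_sub hint₂ hint₃,
    intervalIntegral.integral_const_mul] at hFTC
  norm_num at hFTC
  linear_combination hFTC

theorem hasDerivAt_integral_comp_affine_mul {F F' g : ℝ → ℝ}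
    (hF : ∀ x, HasDerivAt F (F' x) x) (hF' : Continuous F')
    (hg : IntervalIntegrable g volume 0 1) (a b : ℝ) :
    HasDerivAt (fun s => ∫ t in (0 : ℝ)..1, F ((1 - t) * b + t * s) * g t)
      (∫ t in (0 : ℝ)..1, F' ((1 - t) * b + t * a) * t * g t) a := by
  have hFc : Continuous F := continuous_iff_continuousAt.2 fun x => (hF x).continuousAt
  set R := |a| + |b| + 1
  obtain ⟨M, hM⟩ :=
    (isCompact_closedBall (0 : ℝ) R).exists_bound_of_continuousOn hF'.continuousOn
  have hmem : ∀ t ∈ Ι (0 : ℝ) 1, ∀ x ∈ Metric.ball a 1,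
      (1 - t) * b + t * x ∈ Metric.closedBall 0 R := by
    intro t ht x hx
    rw [uIoc_of_le zero_le_one] at ht
    have hb : b ∈ Metric.closedBall (0 : ℝ) R := by
      rw [mem_closedBall_zero_iff, Real.norm_eq_abs]; linarith [abs_nonneg a]
    have hx' : x ∈ Metric.closedBall (0 : ℝ) R := by
      rw [Metric.mem_ball, Real.dist_eq] at hx
      rw [mem_closedBall_zero_iff, Real.norm_eq_abs]
      linarith [abs_nonneg b, abs_sub_abs_le_abs_sub x a]
    exact convex_closedBall 0 R hb hx' (by linarith [ht.2]) ht.1.le (by ring)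
  refine (hasDerivAt_integral_of_dominated_loc_of_deriv_le (μ := volume) (a := 0) (b := 1)
    (F := fun s t => F ((1 - t) * b + t * s) * g t)
    (F' := fun s t => F' ((1 - t) * b + t * s) * t * g t) (bound := fun t => M * ‖g t‖)
    (Metric.ball_mem_nhds a one_pos) (.of_forall fun x => ?_) ?_ ?_ ?_ (hg.norm.const_mul M)
    (.of_forall fun t _ x _ => ?_)).2
  · exact (Continuous.aestronglyMeasurable (by fun_prop)).mul hg.def'.aestronglyMeasurable
  · exact hg.continuousOn_mul (Continuous.continuousOn (by fun_prop))
  · exact (Continuous.aestronglyMeasurable (by fun_prop)).mul hg.def'.aestronglyMeasurable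
  · refine .of_forall fun t ht x hx => ?_
    have ht' := (uIoc_of_le (zero_le_one' ℝ)) ▸ ht
    rw [norm_mul, norm_mul, Real.norm_of_nonneg ht'.1.le]
    gcongr
    have hM0 : 0 ≤ M := (norm_nonneg _).trans (hM 0 (by simp; positivity))
    simpa using mul_le_mul (hM _ (hmem t ht x hx)) ht'.2 ht'.1.le hM0
  · have hu : HasDerivAt (fun x => (1 - t) * b + t * x) t x := by
      simpa using ((hasDerivAt_id x).const_mul t).const_add ((1 - t) * b)
    exact ((hF _).comp x hu).mul_const (g t)

theorem hasDerivAt_psi_left (Q : Polynomial ℝ) (b : ℝ) :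
    ∀ a ∈ Set.Iio b, HasDerivAt (fun s => psi Q s b) (-(1 / 2) * phi Q a b) a := by
  intro a _
  set p := Q.derivative
  have hI := hasDerivAt_integral_comp_affine_mul (fun x => p.hasDerivAt x)
    p.derivative.continuous intervalIntegrable_sqrt_one_sub_div_self a b
  simp only [mul_assoc, Real.mul_sqrt_one_sub_div_self] at hI
  have hu (t : ℝ) : HasDerivAt (fun t => (1 - t) * b + t * a) (a - b) t :=
    (((hasDerivAt_id' t).const_sub 1).mul_const b |>.add
      ((hasDerivAt_id' t).mul_const a)).congr_deriv (by ring)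
  have hparts := integral_deriv_mul_sqrt_mul_one_sub
    (f := fun t => p.eval ((1 - t) * b + t * a))
    (f' := fun t => (a - b) * p.derivative.eval ((1 - t) * b + t * a)) (by fun_prop)
    ((by fun_prop : Continuous _).intervalIntegrable 0 1)
    (fun t _ => ((p.hasDerivAt _).comp t (hu t)).congr_deriv (mul_comm _ _))
  simp only [mul_assoc, intervalIntegral.integral_const_mul] at hparts
  refine (((hasDerivAt_id' a).const_sub b).mul hI |>.sub_const (2 * Real.pi)).congr_deriv ?_
  rw [phi]
  linear_combination -hparts
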